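/- For the ℤ/2 cellular chain complex with boundary maps ∂₄: C_4 → C_3 and ∂₃: C_3 → C_2 as specified in the paper, one has ∂₃ ∘ ∂₄ = 0. -/

import Mathlib

abbrev Ch (ι : Type) := ι → ZMod 2

/-- basis chain corresponding to a single cell -/
def ee {ι : Type} [DecidableEq ι] (i : ι) : Ch ι := Pi.single i 1

/-- the ℤ/2-linear boundary map determined by its values on cells -/
def mkBd {ι κ : Type} [Fintype ι] (d : ι → Ch κ) : Ch ι →ₗ[ZMod 2] Ch κ where
  toFun f := ∑ i, f i • d i
  map_add' x y := by simp [add_smul, Finset.sum_add_distrib]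
  map_smul' c x := by simp [Finset.smul_sum, smul_smul]

inductive Cells1
  | Yb1
  | Yb2
  | Ub1
  | Ub2
  | Zb
  | Thb
  | Nab
  deriving DecidableEq

instance instFintypeCells1 : Fintype Cells1 :=
  Fintype.ofList [Cells1.Yb1, Cells1.Yb2, Cells1.Ub1, Cells1.Ub2, Cells1.Zb, Cells1.Thb, Cells1.Nab] (by intro x; cases x <;> decide)

inductive Cells2
  | Y1
  | Y2
  | U1
  | U2
  | Z
  | Th
  | Lb123
  | Lb231
  | Lb312
  | Lb132
  | Lb213
  | Lb321
  | Mb1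
  | Mb2
  | Mb3
  | Nb1
  | Nb2
  | Nb3
  | Pb1
  | Pb2
  | Sb1
  | Sb2
  | Xbp
  | Xbm
  | Vb1p
  | Vb2p
  | Vb1m
  | Vb2m
  | Omb
  deriving DecidableEq

instance instFintypeCells2 : Fintype Cells2 :=
  Fintype.ofList [Cells2.Y1, Cells2.Y2, Cells2.U1, Cells2.U2, Cells2.Z, Cells2.Th, Cells2.Lb123, Cells2.Lb231, Cells2.Lb312, Cells2.Lb132, Cells2.Lb213, Cells2.Lb321, Cells2.Mb1, Cells2.Mb2, Cells2.Mb3, Cells2.Nb1, Cells2.Nb2, Cells2.Nb3, Cells2.Pb1, Cells2.Pb2, Cells2.Sb1, Cells2.Sb2, Cells2.Xbp, Cells2.Xbm, Cells2.Vb1p, Cells2.Vb2p, Cells2.Vb1m, Cells2.Vb2m, Cells2.Omb] (by intro x; cases x <;> decide)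

/-- boundary values on cells -/
def d2 : Cells2 → Ch Cells1
  | .Y1 => ee Cells1.Nab + ee Cells1.Yb1 + ee Cells1.Yb2
  | .Y2 => ee Cells1.Nab + ee Cells1.Yb2 + ee Cells1.Yb1
  | .U1 => ee Cells1.Nab + ee Cells1.Ub1 + ee Cells1.Ub2
  | .U2 => ee Cells1.Nab + ee Cells1.Ub2 + ee Cells1.Ub1
  | .Z => ee Cells1.Nab
  | .Th => 0
  | .Lb123 => ee Cells1.Ub1 + ee Cells1.Zb + ee Cells1.Yb2
  | .Lb231 => ee Cells1.Yb1 + ee Cells1.Ub2 + ee Cells1.Zb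
  | .Lb312 => ee Cells1.Zb + ee Cells1.Yb2 + ee Cells1.Ub2
  | .Lb132 => ee Cells1.Yb1 + ee Cells1.Zb + ee Cells1.Ub2
  | .Lb213 => ee Cells1.Ub1 + ee Cells1.Yb2 + ee Cells1.Zb
  | .Lb321 => ee Cells1.Zb + ee Cells1.Ub2 + ee Cells1.Yb2
  | .Mb1 => ee Cells1.Ub1 + ee Cells1.Yb1 + ee Cells1.Ub2
  | .Mb2 => ee Cells1.Ub1 + ee Cells1.Ub2 + ee Cells1.Yb1
  | .Mb3 => ee Cells1.Yb2
  | .Nb1 => ee Cells1.Yb1 + ee Cells1.Ub2 + ee Cells1.Yb2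
  | .Nb2 => ee Cells1.Yb1 + ee Cells1.Yb2 + ee Cells1.Ub2
  | .Nb3 => ee Cells1.Ub1
  | .Pb1 => 0
  | .Pb2 => 0
  | .Sb1 => 0
  | .Sb2 => 0
  | .Xbp => ee Cells1.Yb1 + ee Cells1.Yb2
  | .Xbm => ee Cells1.Yb1 + ee Cells1.Yb2
  | .Vb1p => ee Cells1.Yb1 + ee Cells1.Ub1
  | .Vb2p => ee Cells1.Yb2 + ee Cells1.Ub2
  | .Vb1m => ee Cells1.Yb1 + ee Cells1.Ub1
  | .Vb2m => ee Cells1.Yb2 + ee Cells1.Ub2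
  | .Omb => 0

/-- the boundary operator -/
def bd2 : Ch Cells2 →ₗ[ZMod 2] Ch Cells1 := mkBd d2

inductive Cells3
  | L123
  | L231
  | L312
  | L132
  | L213
  | L321
  | M1
  | M2
  | M3
  | N1
  | N2
  | N3
  | P1
  | P2
  | S1
  | S2
  | Xp
  | Xm
  | V1p
  | V2p
  | V1m
  | V2m
  | Om
  | Fb1
  | Fb2
  | Fb3
  | Fb4
  | Gb1234
  | Gb1243
  | Gb1324
  | Gb1342
  | Gb1423
  | Gb1432
  | Gb2134
  | Gb2143
  | Gb2341
  | Gb2431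
  | Gb3142
  | Gb3241
  | Hb1
  | Hb2
  | Hb3
  | Hb4
  | Ib1
  | Ib2
  | Ib3
  | Jb123p
  | Jb123m
  | Jb132p
  | Jb132m
  | Jb213p
  | Jb213m
  | Jb231p
  | Jb231m
  | Jb312p
  | Jb312m
  | Jb321p
  | Jb321m
  | Kb1p
  | Kb1m
  | Kb2p
  | Kb2m
  | Kb3p
  | Kb3m
  | Wb1p
  | Wb1m
  | Wb2p
  | Wb2m
  deriving DecidableEq

instance instFintypeCells3 : Fintype Cells3 :=
  Fintype.ofList [Cells3.L123, Cells3.L231, Cells3.L312, Cells3.L132, Cells3.L213, Cells3.L321, Cells3.M1, Cells3.M2, Cells3.M3, Cells3.N1, Cells3.N2, Cells3.N3, Cells3.P1, Cells3.P2, Cells3.S1, Cells3.S2, Cells3.Xp, Cells3.Xm, Cells3.V1p, Cells3.V2p, Cells3.V1m, Cells3.V2m, Cells3.Om, Cells3.Fb1, Cells3.Fb2, Cells3.Fb3, Cells3.Fb4, Cells3.Gb1234, Cells3.Gb1243, Cells3.Gb1324, Cells3.Gb1342, Cells3.Gb1423, Cells3.Gb1432, Cells3.Gb2134, Cells3.Gb2143,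 Cells3.Gb2341, Cells3.Gb2431, Cells3.Gb3142, Cells3.Gb3241, Cells3.Hb1, Cells3.Hb2, Cells3.Hb3, Cells3.Hb4, Cells3.Ib1, Cells3.Ib2, Cells3.Ib3, Cells3.Jb123p, Cells3.Jb123m, Cells3.Jb132p, Cells3.Jb132m, Cells3.Jb213p, Cells3.Jb213m, Cells3.Jb231p, Cells3.Jb231m, Cells3.Jb312p, Cells3.Jb312m, Cells3.Jb321p, Cells3.Jb321m, Cells3.Kb1p, Cells3.Kb1m, Cells3.Kb2p, Cells3.Kb2m, Cells3.Kb3p, Cells3.Kb3m, Cells3.Wb1p, Cells3.Wb1m, Cells3.Wb2p, Cells3.Wb2m] (by intro x; cases x <;> decide)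

/-- boundary values on cells -/
def d3 : Cells3 → Ch Cells2
  | .L123 => ee Cells2.U1 + ee Cells2.Z + ee Cells2.Lb123 + ee Cells2.Lb312
  | .L231 => ee Cells2.Y1 + ee Cells2.U2 + ee Cells2.Lb231 + ee Cells2.Lb123
  | .L312 => ee Cells2.Z + ee Cells2.Y2 + ee Cells2.Lb312 + ee Cells2.Lb231
  | .L132 => ee Cells2.Y1 + ee Cells2.Z + ee Cells2.Lb132 + ee Cells2.Lb321
  | .L213 => ee Cells2.U1 + ee Cells2.Y2 + ee Cells2.Lb213 + ee Cells2.Lb132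
  | .L321 => ee Cells2.Z + ee Cells2.U2 + ee Cells2.Lb321 + ee Cells2.Lb213
  | .M1 => ee Cells2.U1 + ee Cells2.Y1 + ee Cells2.Mb1 + ee Cells2.Mb3
  | .M2 => ee Cells2.U1 + ee Cells2.U2 + ee Cells2.Mb2 + ee Cells2.Mb1
  | .M3 => ee Cells2.Y2 + ee Cells2.U2 + ee Cells2.Mb3 + ee Cells2.Mb2
  | .N1 => ee Cells2.Y1 + ee Cells2.U2 + ee Cells2.Nb1 + ee Cells2.Nb3
  | .N2 => ee Cells2.Y1 + ee Cells2.Y2 + ee Cells2.Nb2 + ee Cells2.Nb1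
  | .N3 => ee Cells2.U1 + ee Cells2.Y2 + ee Cells2.Nb3 + ee Cells2.Nb2
  | .P1 => ee Cells2.Th + ee Cells2.Pb1 + ee Cells2.Pb2
  | .P2 => ee Cells2.Th + ee Cells2.Pb2 + ee Cells2.Pb1
  | .S1 => ee Cells2.Th + ee Cells2.Sb1 + ee Cells2.Sb2
  | .S2 => ee Cells2.Th + ee Cells2.Sb2 + ee Cells2.Sb1
  | .Xp => ee Cells2.Y1 + ee Cells2.Y2 + ee Cells2.Th
  | .Xm => ee Cells2.Y1 + ee Cells2.Y2
  | .V1p => ee Cells2.Y1 + ee Cells2.U1 + ee Cells2.Vb1p + ee Cells2.Vb2p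
  | .V2p => ee Cells2.Y2 + ee Cells2.U2 + ee Cells2.Vb2p + ee Cells2.Vb1p
  | .V1m => ee Cells2.Y1 + ee Cells2.U1 + ee Cells2.Th + ee Cells2.Vb1m + ee Cells2.Vb2m
  | .V2m => ee Cells2.Y2 + ee Cells2.U2 + ee Cells2.Th + ee Cells2.Vb2m + ee Cells2.Vb1m
  | .Om => 0
  | .Fb1 => ee Cells2.Mb1 + ee Cells2.Lb123 + ee Cells2.Lb132 + ee Cells2.Mb3
  | .Fb2 => ee Cells2.Mb1 + ee Cells2.Mb2 + ee Cells2.Lb231 + ee Cells2.Lb132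
  | .Fb3 => ee Cells2.Lb213 + ee Cells2.Mb2 + ee Cells2.Mb3 + ee Cells2.Lb231
  | .Fb4 => ee Cells2.Lb312 + ee Cells2.Lb321
  | .Gb1234 => ee Cells2.Lb123 + ee Cells2.Nb3 + ee Cells2.Lb312 + ee Cells2.Nb1 + ee Cells2.Xbm
  | .Gb1243 => ee Cells2.Lb132 + ee Cells2.Nb2 + ee Cells2.Lb312 + ee Cells2.Mb3 + ee Cells2.Vb2p
  | .Gb1324 => ee Cells2.Mb1 + ee Cells2.Vb1m + ee Cells2.Sb1 + ee Cells2.Nb2 + ee Cells2.Xbm + ee Cells2.Omb + ee Cells2.Sb2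
  | .Gb1342 => ee Cells2.Nb2 + ee Cells2.Xbm + ee Cells2.Mb3 + ee Cells2.Vb2m + ee Cells2.Omb
  | .Gb1423 => ee Cells2.Mb1 + ee Cells2.Lb213 + ee Cells2.Nb3 + ee Cells2.Vb1p + ee Cells2.Lb312
  | .Gb1432 => ee Cells2.Nb3 + ee Cells2.Lb213 + ee Cells2.Nb2 + ee Cells2.Xbm + ee Cells2.Lb321
  | .Gb2134 => ee Cells2.Lb123 + ee Cells2.Mb2 + ee Cells2.Lb321 + ee Cells2.Nb3 + ee Cells2.Vb1p
  | .Gb2143 => ee Cells2.Lb132 + ee Cells2.Nb1 + ee Cells2.Lb321 + ee Cells2.Nb2 + ee Cells2.Xbm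
  | .Gb2341 => ee Cells2.Nb2 + ee Cells2.Lb231 + ee Cells2.Nb1 + ee Cells2.Xbm + ee Cells2.Lb312
  | .Gb2431 => ee Cells2.Mb2 + ee Cells2.Nb1 + ee Cells2.Xbm + ee Cells2.Sb1 + ee Cells2.Omb + ee Cells2.Vb1m + ee Cells2.Sb2
  | .Gb3142 => ee Cells2.Mb3 + ee Cells2.Vb2m + ee Cells2.Nb1 + ee Cells2.Xbm + ee Cells2.Omb
  | .Gb3241 => ee Cells2.Nb1 + ee Cells2.Lb231 + ee Cells2.Mb3 + ee Cells2.Vb2p + ee Cells2.Lb321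
  | .Hb1 => ee Cells2.Mb1 + ee Cells2.Nb3 + ee Cells2.Nb2 + ee Cells2.Mb3
  | .Hb2 => ee Cells2.Mb1 + ee Cells2.Mb2 + ee Cells2.Nb1 + ee Cells2.Nb2
  | .Hb3 => ee Cells2.Nb3 + ee Cells2.Mb2 + ee Cells2.Mb3 + ee Cells2.Nb1
  | .Hb4 => ee Cells2.Nb2 + ee Cells2.Nb1
  | .Ib1 => ee Cells2.Sb1 + ee Cells2.Pb1 + ee Cells2.Sb2
  | .Ib2 => ee Cells2.Sb1 + ee Cells2.Sb2 + ee Cells2.Pb1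
  | .Ib3 => ee Cells2.Pb2
  | .Jb123p => ee Cells2.Xbm + ee Cells2.Mb1 + ee Cells2.Nb3 + ee Cells2.Vb2p
  | .Jb123m => ee Cells2.Sb1 + ee Cells2.Xbp + ee Cells2.Mb1 + ee Cells2.Nb3 + ee Cells2.Vb2m
  | .Jb132p => ee Cells2.Vb1m + ee Cells2.Xbp + ee Cells2.Mb1 + ee Cells2.Nb2 + ee Cells2.Sb2
  | .Jb132m => ee Cells2.Vb1p + ee Cells2.Xbm + ee Cells2.Mb1 + ee Cells2.Nb2
  | .Jb213p => ee Cells2.Sb1 + ee Cells2.Vb2m + ee Cells2.Mb2 + ee Cells2.Nb3 + ee Cells2.Xbp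
  | .Jb213m => ee Cells2.Vb2p + ee Cells2.Mb2 + ee Cells2.Nb3 + ee Cells2.Xbm
  | .Jb231p => ee Cells2.Vb1p + ee Cells2.Mb2 + ee Cells2.Nb1 + ee Cells2.Xbm
  | .Jb231m => ee Cells2.Vb1m + ee Cells2.Sb2 + ee Cells2.Mb2 + ee Cells2.Nb1 + ee Cells2.Xbp
  | .Jb312p => ee Cells2.Xbm + ee Cells2.Vb2p + ee Cells2.Mb3 + ee Cells2.Nb2
  | .Jb312m => ee Cells2.Xbp + ee Cells2.Vb2m + ee Cells2.Mb3 + ee Cells2.Nb2 + ee Cells2.Sb2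
  | .Jb321p => ee Cells2.Xbp + ee Cells2.Mb3 + ee Cells2.Nb1 + ee Cells2.Sb2 + ee Cells2.Vb2m
  | .Jb321m => ee Cells2.Xbm + ee Cells2.Mb3 + ee Cells2.Nb1 + ee Cells2.Vb2p
  | .Kb1p => ee Cells2.Vb1p + ee Cells2.Nb3 + ee Cells2.Nb2 + ee Cells2.Vb2p
  | .Kb1m => ee Cells2.Vb1m + ee Cells2.Pb2 + ee Cells2.Nb3 + ee Cells2.Nb2 + ee Cells2.Vb2m
  | .Kb2p => ee Cells2.Vb1p + ee Cells2.Vb2p + ee Cells2.Nb1 + ee Cells2.Nb3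
  | .Kb2m => ee Cells2.Vb1m + ee Cells2.Vb2m + ee Cells2.Nb1 + ee Cells2.Nb3 + ee Cells2.Pb2
  | .Kb3p => ee Cells2.Nb1 + ee Cells2.Nb2
  | .Kb3m => ee Cells2.Pb1 + ee Cells2.Nb1 + ee Cells2.Nb2
  | .Wb1p => ee Cells2.Pb1 + ee Cells2.Vb1p + ee Cells2.Vb1m + ee Cells2.Omb
  | .Wb1m => ee Cells2.Pb1 + ee Cells2.Vb1p + ee Cells2.Vb1m + ee Cells2.Omb
  | .Wb2p => ee Cells2.Pb2 + ee Cells2.Vb2p + ee Cells2.Vb2m + ee Cells2.Omb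
  | .Wb2m => ee Cells2.Pb2 + ee Cells2.Vb2p + ee Cells2.Vb2m + ee Cells2.Omb

/-- the boundary operator -/
def bd3 : Ch Cells3 →ₗ[ZMod 2] Ch Cells2 := mkBd d3

inductive Cells4
  | F1
  | F2
  | F3
  | F4
  | G1234
  | G1243
  | G1324
  | G1342
  | G1423
  | G1432
  | G2134
  | G2143
  | G2341
  | G2431
  | G3142
  | G3241
  | H1
  | H2
  | H3
  | H4
  | I1
  | I2
  | I3
  | J123p
  | J123m
  | J132p
  | J132m
  | J213p
  | J213m
  | J231p
  | J231m
  | J312p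
  | J312m
  | J321p
  | J321m
  | K1p
  | K1m
  | K2p
  | K2m
  | K3p
  | K3m
  | W1p
  | W1m
  | W2p
  | W2m
  | Bb
  | Cb12
  | Cb13
  | Cb14
  | Cb15
  | Cb21
  | Cb23
  | Cb24
  | Cb25
  | Cb31
  | Cb32
  | Cb34
  | Cb35
  | Cb41
  | Cb42
  | Cb43
  | Cb45
  | Cb51
  | Cb52
  | Cb53
  | Cb54
  | Db12p
  | Db12m
  | Db13p
  | Db13m
  | Db14p
  | Db14m
  | Db23p
  | Db23m
  | Db24p
  | Db24m
  | Db34p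
  | Db34m
  | Ebp
  | Eb1
  | Eb2
  | Eb3
  deriving DecidableEq

instance instFintypeCells4 : Fintype Cells4 :=
  Fintype.ofList [Cells4.F1, Cells4.F2, Cells4.F3, Cells4.F4, Cells4.G1234, Cells4.G1243, Cells4.G1324, Cells4.G1342, Cells4.G1423, Cells4.G1432, Cells4.G2134, Cells4.G2143, Cells4.G2341, Cells4.G2431, Cells4.G3142, Cells4.G3241, Cells4.H1, Cells4.H2, Cells4.H3, Cells4.H4, Cells4.I1, Cells4.I2, Cells4.I3, Cells4.J123p, Cells4.J123m, Cells4.J132p, Cells4.J132m, Cells4.J213p, Cells4.J213m, Cells4.J231p, Cells4.J231m, Cells4.J312p, Cells4.J312m, Cells4.J321p, Cells4.J321m, Cells4.K1p, Cells4.K1m, Cells4.K2p, Cells4.K2m, Cells4.K3p, Cells4.K3m, Cells4.W1p, Cells4.W1m, Cells4.W2p, Cells4.W2m, Cells4.Bb, Cells4.Cb12, Cells4.Cb13, Cells4.Cb14, Cells4.Cb15, Cells4.Cb21, Cells4.Cb23, Cells4.Cb24, Cells4.Cb25, Cells4.Cb31, Cells4.Cb32, Cells4.Cb34, Cells4.Cb35,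 Cells4.Cb41, Cells4.Cb42, Cells4.Cb43, Cells4.Cb45, Cells4.Cb51, Cells4.Cb52, Cells4.Cb53, Cells4.Cb54, Cells4.Db12p, Cells4.Db12m, Cells4.Db13p, Cells4.Db13m, Cells4.Db14p, Cells4.Db14m, Cells4.Db23p, Cells4.Db23m, Cells4.Db24p, Cells4.Db24m, Cells4.Db34p, Cells4.Db34m, Cells4.Ebp, Cells4.Eb1, Cells4.Eb2, Cells4.Eb3] (by intro x; cases x <;> decide)

/-- boundary values on cells -/
def d4 : Cells4 → Ch Cells3
  | .F1 => ee Cells3.M1 + ee Cells3.L123 + ee Cells3.L132 + ee Cells3.Fb1 + ee Cells3.Fb4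
  | .F2 => ee Cells3.M1 + ee Cells3.M2 + ee Cells3.L231 + ee Cells3.Fb2 + ee Cells3.Fb1
  | .F3 => ee Cells3.L213 + ee Cells3.M2 + ee Cells3.M3 + ee Cells3.Fb3 + ee Cells3.Fb2
  | .F4 => ee Cells3.L312 + ee Cells3.L321 + ee Cells3.M3 + ee Cells3.Fb4 + ee Cells3.Fb3
  | .G1234 => ee Cells3.L123 + ee Cells3.N3 + ee Cells3.L312 + ee Cells3.Gb1234 + ee Cells3.Gb2341
  | .G1243 => ee Cells3.L132 + ee Cells3.N2 + ee Cells3.L312 + ee Cells3.Gb1243 + ee Cells3.Gb3241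
  | .G1324 => ee Cells3.M1 + ee Cells3.V1m + ee Cells3.S1 + ee Cells3.Gb1324 + ee Cells3.Gb1342
  | .G1342 => ee Cells3.N2 + ee Cells3.Xm + ee Cells3.Gb1342 + ee Cells3.Gb3142
  | .G1423 => ee Cells3.M1 + ee Cells3.L213 + ee Cells3.N3 + ee Cells3.V1p + ee Cells3.Gb1423 + ee Cells3.Gb1243
  | .G1432 => ee Cells3.N3 + ee Cells3.L213 + ee Cells3.N2 + ee Cells3.Xm + ee Cells3.Gb1432 + ee Cells3.Gb2143
  | .G2134 => ee Cells3.L123 + ee Cells3.M2 + ee Cells3.L321 + ee Cells3.Gb2134 + ee Cells3.Gb1423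
  | .G2143 => ee Cells3.L132 + ee Cells3.N1 + ee Cells3.L321 + ee Cells3.Gb2143 + ee Cells3.Gb1432
  | .G2341 => ee Cells3.N2 + ee Cells3.L231 + ee Cells3.N1 + ee Cells3.Xm + ee Cells3.Gb2341 + ee Cells3.Gb1234
  | .G2431 => ee Cells3.N3 + ee Cells3.M2 + ee Cells3.N1 + ee Cells3.Xm + ee Cells3.S1 + ee Cells3.S2 + ee Cells3.Om + ee Cells3.Gb2431 + ee Cells3.Gb1324
  | .G3142 => ee Cells3.M3 + ee Cells3.V2m + ee Cells3.S2 + ee Cells3.Gb3142 + ee Cells3.Gb2431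
  | .G3241 => ee Cells3.N1 + ee Cells3.L231 + ee Cells3.M3 + ee Cells3.V2p + ee Cells3.Gb3241 + ee Cells3.Gb2134
  | .H1 => ee Cells3.M1 + ee Cells3.N3 + ee Cells3.N2 + ee Cells3.Hb1 + ee Cells3.Hb4
  | .H2 => ee Cells3.M1 + ee Cells3.M2 + ee Cells3.N1 + ee Cells3.Hb2 + ee Cells3.Hb1
  | .H3 => ee Cells3.N3 + ee Cells3.M2 + ee Cells3.M3 + ee Cells3.Hb3 + ee Cells3.Hb2
  | .H4 => ee Cells3.N2 + ee Cells3.N1 + ee Cells3.M3 + ee Cells3.Hb4 + ee Cells3.Hb3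
  | .I1 => ee Cells3.S1 + ee Cells3.P1 + ee Cells3.Ib1 + ee Cells3.Ib3
  | .I2 => ee Cells3.S1 + ee Cells3.S2 + ee Cells3.Ib2 + ee Cells3.Ib1
  | .I3 => ee Cells3.P2 + ee Cells3.S2 + ee Cells3.Ib3 + ee Cells3.Ib2
  | .J123p => ee Cells3.Xm + ee Cells3.M1 + ee Cells3.N3 + ee Cells3.Jb123p + ee Cells3.Jb312p
  | .J123m => ee Cells3.S1 + ee Cells3.Xp + ee Cells3.M1 + ee Cells3.N3 + ee Cells3.Jb123m + ee Cells3.Jb312m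
  | .J132p => ee Cells3.V1m + ee Cells3.Xp + ee Cells3.M1 + ee Cells3.N2 + ee Cells3.Jb132p + ee Cells3.Jb321p
  | .J132m => ee Cells3.V1p + ee Cells3.Xm + ee Cells3.M1 + ee Cells3.N2 + ee Cells3.Jb132m + ee Cells3.Jb321m
  | .J213p => ee Cells3.S1 + ee Cells3.V2m + ee Cells3.M2 + ee Cells3.N3 + ee Cells3.Jb213p + ee Cells3.Jb132p
  | .J213m => ee Cells3.V2p + ee Cells3.M2 + ee Cells3.N3 + ee Cells3.Jb213m + ee Cells3.Jb132m
  | .J231p => ee Cells3.V1p + ee Cells3.M2 + ee Cells3.N1 + ee Cells3.Jb231p + ee Cells3.Jb123p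
  | .J231m => ee Cells3.V1m + ee Cells3.S2 + ee Cells3.M2 + ee Cells3.N1 + ee Cells3.Jb231m + ee Cells3.Jb123m
  | .J312p => ee Cells3.Xm + ee Cells3.V2p + ee Cells3.M3 + ee Cells3.N2 + ee Cells3.Jb312p + ee Cells3.Jb231p
  | .J312m => ee Cells3.Xp + ee Cells3.V2m + ee Cells3.M3 + ee Cells3.N2 + ee Cells3.Jb312m + ee Cells3.Jb231m
  | .J321p => ee Cells3.Xp + ee Cells3.M3 + ee Cells3.N1 + ee Cells3.S2 + ee Cells3.Jb321p + ee Cells3.Jb213p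
  | .J321m => ee Cells3.Xm + ee Cells3.M3 + ee Cells3.N1 + ee Cells3.Jb321m + ee Cells3.Jb213m
  | .K1p => ee Cells3.V1p + ee Cells3.N3 + ee Cells3.N2 + ee Cells3.Kb1p + ee Cells3.Kb3p
  | .K1m => ee Cells3.V1m + ee Cells3.P2 + ee Cells3.N3 + ee Cells3.N2 + ee Cells3.Kb1m + ee Cells3.Kb3m
  | .K2p => ee Cells3.V1p + ee Cells3.V2p + ee Cells3.N1 + ee Cells3.N3 + ee Cells3.Kb2p + ee Cells3.Kb1p
  | .K2m => ee Cells3.V1m + ee Cells3.V2m + ee Cells3.N1 + ee Cells3.N3 + ee Cells3.Kb2m + ee Cells3.Kb1m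
  | .K3p => ee Cells3.V2p + ee Cells3.N1 + ee Cells3.N2 + ee Cells3.Kb3p + ee Cells3.Kb2p
  | .K3m => ee Cells3.P1 + ee Cells3.V2m + ee Cells3.N1 + ee Cells3.N2 + ee Cells3.Kb3m + ee Cells3.Kb2m
  | .W1p => ee Cells3.P1 + ee Cells3.V1p + ee Cells3.V1m + ee Cells3.Wb1p + ee Cells3.Wb2p
  | .W1m => ee Cells3.P1 + ee Cells3.V1p + ee Cells3.V1m + ee Cells3.Om + ee Cells3.Wb2m + ee Cells3.Wb1m
  | .W2p => ee Cells3.P2 + ee Cells3.V2p + ee Cells3.V2m + ee Cells3.Om + ee Cells3.Wb1p + ee Cells3.Wb2p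
  | .W2m => ee Cells3.P2 + ee Cells3.V2p + ee Cells3.V2m + ee Cells3.Wb2m + ee Cells3.Wb1m
  | .Bb => ee Cells3.Hb1 + ee Cells3.Hb2 + ee Cells3.Hb3
  | .Cb12 => ee Cells3.Fb1 + ee Cells3.Hb1 + ee Cells3.Gb1234 + ee Cells3.Gb1243 + ee Cells3.Hb4 + ee Cells3.Jb312p
  | .Cb13 => ee Cells3.Hb1 + ee Cells3.Jb123p + ee Cells3.Gb1342 + ee Cells3.Hb4 + ee Cells3.Ib3 + ee Cells3.Wb2p + ee Cells3.Jb312m + ee Cells3.Jb321p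
  | .Cb14 => ee Cells3.Hb1 + ee Cells3.Gb1324 + ee Cells3.Jb123m + ee Cells3.Jb132p + ee Cells3.Ib3 + ee Cells3.Wb2m + ee Cells3.Hb4 + ee Cells3.Jb321m
  | .Cb15 => ee Cells3.Gb1423 + ee Cells3.Gb1432 + ee Cells3.Jb132m + ee Cells3.Fb4
  | .Cb21 => ee Cells3.Fb1 + ee Cells3.Hb2 + ee Cells3.Gb2134 + ee Cells3.Gb2143 + ee Cells3.Hb1 + ee Cells3.Jb132m
  | .Cb23 => ee Cells3.Hb1 + ee Cells3.Fb2 + ee Cells3.Hb2 + ee Cells3.Gb2341 + ee Cells3.Jb123p + ee Cells3.Gb1243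
  | .Cb24 => ee Cells3.Hb1 + ee Cells3.Hb2 + ee Cells3.Jb123m + ee Cells3.Jb132p + ee Cells3.Jb231p + ee Cells3.Ib1 + ee Cells3.Wb1p + ee Cells3.Gb1342
  | .Cb25 => ee Cells3.Gb2431 + ee Cells3.Jb132m + ee Cells3.Jb231m + ee Cells3.Ib1 + ee Cells3.Wb1m + ee Cells3.Jb132p
  | .Cb31 => ee Cells3.Hb2 + ee Cells3.Hb3 + ee Cells3.Gb3142 + ee Cells3.Jb213p + ee Cells3.Jb132m + ee Cells3.Jb231m + ee Cells3.Ib2 + ee Cells3.Wb1m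
  | .Cb32 => ee Cells3.Hb2 + ee Cells3.Fb2 + ee Cells3.Hb3 + ee Cells3.Gb3241 + ee Cells3.Jb213m + ee Cells3.Gb2143
  | .Cb34 => ee Cells3.Gb1423 + ee Cells3.Hb2 + ee Cells3.Fb3 + ee Cells3.Hb3 + ee Cells3.Jb231p + ee Cells3.Gb2341
  | .Cb35 => ee Cells3.Gb1324 + ee Cells3.Jb231m + ee Cells3.Jb132p + ee Cells3.Jb231p + ee Cells3.Ib2 + ee Cells3.Wb1p
  | .Cb41 => ee Cells3.Gb2431 + ee Cells3.Hb4 + ee Cells3.Jb213p + ee Cells3.Jb312p + ee Cells3.Ib3 + ee Cells3.Hb3 + ee Cells3.Jb231m + ee Cells3.Wb2p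
  | .Cb42 => ee Cells3.Hb3 + ee Cells3.Hb4 + ee Cells3.Jb213m + ee Cells3.Jb312m + ee Cells3.Jb321p + ee Cells3.Gb3142 + ee Cells3.Wb2m + ee Cells3.Ib3
  | .Cb43 => ee Cells3.Gb1432 + ee Cells3.Hb3 + ee Cells3.Fb3 + ee Cells3.Hb4 + ee Cells3.Jb321m + ee Cells3.Gb3241
  | .Cb45 => ee Cells3.Gb1234 + ee Cells3.Gb2134 + ee Cells3.Fb4 + ee Cells3.Jb231p
  | .Cb51 => ee Cells3.Gb2341 + ee Cells3.Gb3241 + ee Cells3.Jb312p + ee Cells3.Fb4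
  | .Cb52 => ee Cells3.Gb3142 + ee Cells3.Jb312m + ee Cells3.Jb321p + ee Cells3.Jb312p + ee Cells3.Ib3 + ee Cells3.Wb2p
  | .Cb53 => ee Cells3.Gb1342 + ee Cells3.Jb321m + ee Cells3.Jb312m + ee Cells3.Jb321p + ee Cells3.Ib3 + ee Cells3.Wb2m
  | .Cb54 => ee Cells3.Gb1243 + ee Cells3.Gb2143 + ee Cells3.Fb4 + ee Cells3.Jb321m
  | .Db12p => ee Cells3.Jb213m + ee Cells3.Kb3p + ee Cells3.Hb1 + ee Cells3.Hb2 + ee Cells3.Jb312p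
  | .Db12m => ee Cells3.Ib1 + ee Cells3.Jb213p + ee Cells3.Kb3m + ee Cells3.Hb1 + ee Cells3.Hb2 + ee Cells3.Jb312m
  | .Db13p => ee Cells3.Jb123m + ee Cells3.Jb213p + ee Cells3.Jb312m + ee Cells3.Hb1 + ee Cells3.Hb3 + ee Cells3.Jb321p
  | .Db13m => ee Cells3.Jb123p + ee Cells3.Jb213m + ee Cells3.Jb312p + ee Cells3.Hb1 + ee Cells3.Hb3 + ee Cells3.Jb321m
  | .Db14p => ee Cells3.Jb132m + ee Cells3.Kb2p + ee Cells3.Jb312p + ee Cells3.Hb1 + ee Cells3.Hb4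
  | .Db14m => ee Cells3.Jb132p + ee Cells3.Kb2m + ee Cells3.Jb312m + ee Cells3.Hb1 + ee Cells3.Hb4 + ee Cells3.Ib3
  | .Db23p => ee Cells3.Jb123p + ee Cells3.Jb321m + ee Cells3.Hb2 + ee Cells3.Hb3 + ee Cells3.Kb3p
  | .Db23m => ee Cells3.Jb123m + ee Cells3.Ib2 + ee Cells3.Jb321p + ee Cells3.Hb2 + ee Cells3.Hb3 + ee Cells3.Kb3m
  | .Db24p => ee Cells3.Jb132p + ee Cells3.Jb231m + ee Cells3.Jb321p + ee Cells3.Hb2 + ee Cells3.Hb4 + ee Cells3.Jb312m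
  | .Db24m => ee Cells3.Jb132m + ee Cells3.Jb231p + ee Cells3.Jb321m + ee Cells3.Hb2 + ee Cells3.Hb4 + ee Cells3.Jb312p
  | .Db34p => ee Cells3.Kb1p + ee Cells3.Jb231p + ee Cells3.Hb3 + ee Cells3.Hb4 + ee Cells3.Jb321m
  | .Db34m => ee Cells3.Kb1m + ee Cells3.Jb231m + ee Cells3.Hb3 + ee Cells3.Hb4 + ee Cells3.Jb321p + ee Cells3.Ib3
  | .Ebp => ee Cells3.Kb1p + ee Cells3.Kb2p + ee Cells3.Kb3p
  | .Eb1 => ee Cells3.Kb1p + ee Cells3.Kb2m + ee Cells3.Kb3m + ee Cells3.Wb1p + ee Cells3.Wb2m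
  | .Eb2 => ee Cells3.Kb1m + ee Cells3.Kb2p + ee Cells3.Kb3m + ee Cells3.Wb1m + ee Cells3.Wb2p
  | .Eb3 => ee Cells3.Kb1m + ee Cells3.Kb2m + ee Cells3.Kb3p + ee Cells3.Wb2m + ee Cells3.Wb2p

/-- the boundary operator -/
def bd4 : Ch Cells4 →ₗ[ZMod 2] Ch Cells3 := mkBd d4

lemma mkBd_ee {ι κ : Type} [Fintype ι] [DecidableEq ι] (d : ι → Ch κ) (i : ι) :
    mkBd d (ee i) = d i := by
  show ∑ j, ee i j • d j = d i
  simp [ee, Pi.single_apply]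

lemma comp_mkBd_eq_zero {ι κ M : Type} [Fintype ι] [AddCommGroup M] [Module (ZMod 2) M]
    (f : Ch κ →ₗ[ZMod 2] M) (d : ι → Ch κ) (h : ∀ i, f (d i) = 0) : f ∘ₗ mkBd d = 0 := by
  ext x
  show f (∑ i, x i • d i) = 0
  simp [h]

lemma bd3_ee (j : Cells3) : bd3 (ee j) = d3 j := mkBd_ee d3 j

/-- ∂₃ ∘ ∂₄ = 0 for the mod 2 cellular chain complex of `\overline{TD}_2(S¹)`. -/
theorem bd3_comp_bd4 : bd3 ∘ₗ bd4 = 0 := by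
  refine comp_mkBd_eq_zero bd3 d4 fun i => ?_
  cases i <;> (simp only [d4, map_add, bd3_ee]; decide)
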